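/- For a differential k-form ω of class B^r on ℝⁿ, the norm ‖ω‖_{B^r} equals the operator norm: ‖ω‖_{B^r} = sup{|ω(A)|/‖A‖_{B^r} : A a nonzero Dirac k-chain}. -/
import Mathlib


noncomputable section

open Finsupp Filter

variable {E W : Type*} [NormedAddCommGroup E] [NormedSpace ℝ E]
  [NormedAddCommGroup W] [NormedSpace ℝ W]

/-- Translation of a Dirac chain through the vector `u`. -/
def transl (u : E) (A : E →₀ W) : E →₀ W := Finsupp.mapDomain (· + u) A

/-- The difference operator `Δ_u = T_u - I`. -/
def del (u : E) (A : E →₀ W) : E →₀ W := transl u A - A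

/-- Iterated difference chain along a list of vectors. -/
def diff : List E → (E →₀ W) → (E →₀ W)
  | [], A => A
  | u :: σ, A => del u (diff σ A)

/-- The product of the norms of the vectors in the list `σ`. -/
def lnorm (σ : List E) : ℝ := (σ.map norm).prod

/-- Costs of representations of `A` as sums of `j`-difference chains with `j ≤ r`. -/
def reps (r : ℕ) (A : E →₀ W) : Set ℝ :=
  {c | ∃ (m : ℕ) (σ : Fin m → List E) (p : Fin m → E) (α : Fin m → W),
      (∀ i, (σ i).length ≤ r) ∧
      A = ∑ i, diff (σ i) (Finsupp.single (p i) (α i)) ∧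
      c = ∑ i, lnorm (σ i) * ‖α i‖}

/-- The `B^r` norm of a Dirac chain. -/
def Bnorm (r : ℕ) (A : E →₀ W) : ℝ := sInf (reps r A)

/-- `M` is a `B^r`-bound for the cochain (differential form) `ω`. -/
def IsFormBound (r : ℕ) (ω : (E →₀ W) →ₗ[ℝ] ℝ) (M : ℝ) : Prop :=
  ∀ (σ : List E) (p : E) (α : W), σ.length ≤ r →
    |ω (diff σ (Finsupp.single p α))| ≤ M * lnorm σ * ‖α‖

/-- The `B^r` norm of a differential form. -/
def formNorm (r : ℕ) (ω : (E →₀ W) →ₗ[ℝ] ℝ) : ℝ :=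
  sInf {M | 0 ≤ M ∧ IsFormBound r ω M}


set_option linter.unusedSectionVars false

lemma lnorm_nonneg (σ : List E) : 0 ≤ lnorm σ := by
  unfold lnorm
  apply List.prod_nonneg
  intro x hx
  simp only [List.mem_map] at hx
  obtain ⟨u, -, rfl⟩ := hx
  exact norm_nonneg u

lemma reps_nonneg {r : ℕ} {A : E →₀ W} : ∀ c ∈ reps r A, 0 ≤ c := by
  rintro c ⟨m, σ, p, α, -, -, rfl⟩
  exact Finset.sum_nonneg fun i _ => mul_nonneg (lnorm_nonneg _) (norm_nonneg _)

lemma reps_nonempty (r : ℕ) (A : E →₀ W) : (reps r A).Nonempty := by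
  refine ⟨_, A.support.card, fun _ => [], fun i => (A.support.equivFin.symm i : E),
    fun i => A (A.support.equivFin.symm i : E), fun i => Nat.zero_le r, ?_, rfl⟩
  simp only [diff]
  have h1 : (∑ i : Fin A.support.card,
      Finsupp.single ((A.support.equivFin.symm i : E)) (A (A.support.equivFin.symm i : E)))
      = ∑ y : A.support, Finsupp.single (y : E) (A y) :=
    Fintype.sum_equiv A.support.equivFin.symm _ _ (fun i => rfl)
  rw [h1, Finset.sum_coe_sort A.support (fun x : E => Finsupp.single x (A x))]
  exact (Finsupp.sum_single A).symm

lemma bnorm_nonneg (r : ℕ) (A : E →₀ W) : 0 ≤ Bnorm r A :=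
  Real.sInf_nonneg reps_nonneg

lemma bnorm_le {r : ℕ} {σ : List E} (p : E) (α : W) (h : σ.length ≤ r) :
    Bnorm r (diff σ (Finsupp.single p α)) ≤ lnorm σ * ‖α‖ := by
  apply csInf_le ⟨0, fun c hc => reps_nonneg c hc⟩
  refine ⟨1, fun _ => σ, fun _ => p, fun _ => α, fun _ => h, ?_, ?_⟩ <;>
    simp [Fin.sum_univ_one]

lemma abs_le_mul_bnorm {r : ℕ} {ω : (E →₀ W) →ₗ[ℝ] ℝ} {M : ℝ}
    (hM : 0 ≤ M) (hb : IsFormBound r ω M) (A : E →₀ W) :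
    |ω A| ≤ M * Bnorm r A := by
  have key : ∀ c ∈ reps r A, |ω A| ≤ M * c := by
    rintro c ⟨m, σ, p, α, hlen, rfl, rfl⟩
    rw [map_sum, Finset.mul_sum]
    refine (Finset.abs_sum_le_sum_abs _ _).trans (Finset.sum_le_sum fun i _ => ?_)
    rw [← mul_assoc]
    exact hb (σ i) (p i) (α i) (hlen i)
  rcases eq_or_lt_of_le hM with rfl | hM'
  · obtain ⟨c, hc⟩ := reps_nonempty r A
    have := key c hc
    simpa using this
  · rw [← div_le_iff₀' hM']
    exact le_csInf (reps_nonempty r A) fun c hc => (div_le_iff₀' hM').2 (key c hc)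

lemma formNorm_nonneg {r : ℕ} {ω : (E →₀ W) →ₗ[ℝ] ℝ} : 0 ≤ formNorm r ω :=
  Real.sInf_nonneg fun M hM => hM.1

lemma isFormBound_formNorm {r : ℕ} {ω : (E →₀ W) →ₗ[ℝ] ℝ}
    (hω : ∃ M, 0 ≤ M ∧ IsFormBound r ω M) : IsFormBound r ω (formNorm r ω) := by
  obtain ⟨M₀, hM₀, hb₀⟩ := hω
  intro σ p α hlen
  rw [mul_assoc]
  set c := lnorm σ * ‖α‖ with hc
  have hc0 : 0 ≤ c := mul_nonneg (lnorm_nonneg σ) (norm_nonneg α)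
  rcases eq_or_lt_of_le hc0 with hc' | hc'
  · have h1 := hb₀ σ p α hlen
    rw [mul_assoc, ← hc, ← hc', mul_zero] at h1
    have h2 : |ω (diff σ (Finsupp.single p α))| = 0 := le_antisymm h1 (abs_nonneg _)
    rw [h2, ← hc', mul_zero]
  · rw [← div_le_iff₀ hc']
    refine le_csInf ⟨M₀, hM₀, hb₀⟩ fun M hM => (div_le_iff₀ hc').2 ?_
    have h1 := hM.2 σ p α hlen
    rwa [mul_assoc, ← hc] at h1

/-- For a differential `k`-form `ω` of class `B^r` on `ℝⁿ`, the `B^r`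
norm of `ω` equals its operator norm over nonzero Dirac `k`-chains:
`‖ω‖_{B^r} = sup{|ω(A)|/‖A‖_{B^r} : A ≠ 0}`. -/
theorem formNorm_eq_operator_norm {n : ℕ} {W : Type*}
    [NormedAddCommGroup W] [NormedSpace ℝ W] (r : ℕ)
    (ω : ((EuclideanSpace ℝ (Fin n)) →₀ W) →ₗ[ℝ] ℝ)
    (hω : ∃ M, 0 ≤ M ∧ IsFormBound r ω M) :
    formNorm r ω =
      sSup {x : ℝ | ∃ A : (EuclideanSpace ℝ (Fin n)) →₀ W,
        A ≠ 0 ∧ x = |ω A| / Bnorm r A} := by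
  obtain ⟨M₀, hM₀, hb₀⟩ := hω
  set F := formNorm r ω with hF
  have hF0 : 0 ≤ F := formNorm_nonneg
  have hFb : IsFormBound r ω F := isFormBound_formNorm ⟨M₀, hM₀, hb₀⟩
  set T := {x : ℝ | ∃ A : (EuclideanSpace ℝ (Fin n)) →₀ W,
      A ≠ 0 ∧ x = |ω A| / Bnorm r A} with hT
  have key : ∀ A : (EuclideanSpace ℝ (Fin n)) →₀ W, |ω A| ≤ F * Bnorm r A :=
    abs_le_mul_bnorm hF0 hFb
  have hub : ∀ x ∈ T, x ≤ F := by
    rintro x ⟨A, hA, rfl⟩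
    rcases eq_or_lt_of_le (bnorm_nonneg r A) with hb | hb
    · rw [← hb]
      simp only [div_zero]
      exact hF0
    · rw [div_le_iff₀ hb]
      exact key A
  have hT0 : ∀ x ∈ T, 0 ≤ x := by
    rintro x ⟨A, hA, rfl⟩
    exact div_nonneg (abs_nonneg _) (bnorm_nonneg r A)
  refine le_antisymm ?_ (Real.sSup_le hub hF0)
  have hMstar0 : 0 ≤ sSup T := Real.sSup_nonneg hT0
  have hMstarb : IsFormBound r ω (sSup T) := by
    intro σ p α hlen
    set A := diff σ (Finsupp.single p α) with hA
    have hrhs : 0 ≤ sSup T * lnorm σ * ‖α‖ :=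
      mul_nonneg (mul_nonneg hMstar0 (lnorm_nonneg σ)) (norm_nonneg α)
    rcases eq_or_ne A 0 with h0 | h0
    · rw [h0]; simpa using hrhs
    rcases eq_or_lt_of_le (bnorm_nonneg r A) with hb | hb
    · have h1 := key A
      rw [← hb, mul_zero] at h1
      have h2 : |ω A| = 0 := le_antisymm h1 (abs_nonneg _)
      rw [h2]; exact hrhs
    · have hmem : |ω A| / Bnorm r A ∈ T := ⟨A, h0, rfl⟩
      have hle : |ω A| / Bnorm r A ≤ sSup T := le_csSup ⟨F, hub⟩ hmem
      rw [div_le_iff₀ hb] at hle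
      calc |ω A| ≤ sSup T * Bnorm r A := hle
        _ ≤ sSup T * (lnorm σ * ‖α‖) :=
            mul_le_mul_of_nonneg_left (bnorm_le p α hlen) hMstar0
        _ = sSup T * lnorm σ * ‖α‖ := by ring
  exact csInf_le ⟨0, fun M hM => hM.1⟩ ⟨hMstar0, hMstarb⟩
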